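/- arXiv:2511.07681 — 7 statements merged into one kernel-verified Lean document; each statement's English description precedes it below -/
import Mathlib

section
/- Assume the travel times satisfy the triangle inequality and the service durations are nonnegative. Let (pi_1, ..., pi_L) be a route with a time-feasible schedule (t_1, ..., t_L) along it, let 1 <= p_1 < p_2 < ... < p_m <= L be positions, set u_r = pi_{p_r}, and let Delta_r be the forward schedule along (u_1, ..., u_m) started at time e(u_1). Then t_{p_r} >= Delta_r for every 1 <= r <= m. In particular, if Delta_m exceeds a latest allowed service time l(u_m), then no route containing (u_1, ..., u_m) as a subsequence admits a time-feasible schedule with t_{p_m} <= l(u_m). -/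
/-!
In a feasible schedule, the triangle inequality and nonnegative service durations let one
skip the intermediate nodes: between any two positions `a < b` of the route the schedule
still advances by at least `s (π a) + d (π a) (π b)`. So a feasible schedule, restricted to
the positions of the subsequence, is a feasible schedule along the subsequence, and the
forward schedule is the least of those, by induction along the recursion.
-/

/-- The forward schedule along the sequence of nodes `v 0, v 1, v 2, ...`
started at time `τ`. -/
noncomputable def fwd {V : Type*} (e s : V → ℝ) (d : V → V → ℝ)
    (v : ℕ → V) (τ : ℝ) : ℕ → ℝ
  | 0 => τ
  | r + 1 => max (e (v (r + 1))) (fwd e s d v τ r + s (v r) + d (v r) (v (r + 1)))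

/-- `t` is a time-feasible schedule along the first `m` nodes of `v`. -/
def TimeFeasible {V : Type*} (e s : V → ℝ) (d : V → V → ℝ)
    (v : ℕ → V) (m : ℕ) (t : ℕ → ℝ) : Prop :=
  (∀ r < m, e (v r) ≤ t r) ∧
  (∀ r, r + 1 < m → t r + s (v r) + d (v r) (v (r + 1)) ≤ t (r + 1))

section

variable {V : Type*} {e s : V → ℝ} {d : V → V → ℝ}

theorem TimeFeasible.add_service_add_travel_le (htri : ∀ a b c : V, d a c ≤ d a b + d b c)
    (hs : ∀ x : V, 0 ≤ s x) {π : ℕ → V} {L : ℕ} {t : ℕ → ℝ}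
    (hf : TimeFeasible e s d π L t) {a b : ℕ} (hab : a < b) (hbL : b < L) :
    t a + s (π a) + d (π a) (π b) ≤ t b := by
  induction b, hab using Nat.le_induction with
  | base => exact hf.2 a hbL
  | succ b hab ih =>
    have hprev := ih (by omega)
    have hstep := hf.2 b hbL
    have := htri (π a) (π b) (π (b + 1))
    have := hs (π b)
    linarith

theorem fwd_le_of_timeFeasible_of_subsequence (htri : ∀ a b c : V, d a c ≤ d a b + d b c)
    (hs : ∀ x : V, 0 ≤ s x) {u π : ℕ → V} {m L : ℕ} {t : ℕ → ℝ} {p : ℕ → ℕ}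
    (hf : TimeFeasible e s d π L t) (hp : ∀ r r', r < r' → r' < m → p r < p r')
    (hpL : ∀ r < m, p r < L) (hu : ∀ r < m, π (p r) = u r) :
    ∀ r < m, fwd e s d u (e (u 0)) r ≤ t (p r) := by
  intro r hr
  induction r with
  | zero =>
    rw [fwd, ← hu 0 hr]
    exact hf.1 _ (hpL 0 hr)
  | succ r ih =>
    have htravel := hf.add_service_add_travel_le htri hs (hp r (r + 1) r.lt_succ_self hr) (hpL _ hr)
    have hearly := hf.1 _ (hpL _ hr)
    rw [hu r (by omega), hu (r + 1) hr] at htravel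
    rw [hu (r + 1) hr] at hearly
    rw [fwd, max_le_iff]
    exact ⟨hearly, by linarith [ih (by omega)]⟩

end

/-- Under the triangle inequality and nonnegative service durations, the forward
schedule along a subsequence `u` (started at `e (u 0)`) lower-bounds any
time-feasible schedule of a route containing `u` as a subsequence, evaluated at
the positions of the subsequence.  Consequently, if the forward schedule's final
value exceeds the latest allowed time `l` at the last node of `u`, no route
containing `u` as a subsequence admits a time-feasible schedule serving that
last node by time `l`. -/
theorem forward_schedule_lower_bounds_subsequence {V : Type*} (e s : V → ℝ)
    (d : V → V → ℝ)
    (htri : ∀ a b c : V, d a c ≤ d a b + d b c) (hs : ∀ x : V, 0 ≤ s x)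
    (u : ℕ → V) (m : ℕ) (hm : 1 ≤ m) :
    (∀ (π : ℕ → V) (L : ℕ) (t : ℕ → ℝ) (p : ℕ → ℕ),
        TimeFeasible e s d π L t →
        (∀ r r', r < r' → r' < m → p r < p r') →
        (∀ r < m, p r < L) →
        (∀ r < m, π (p r) = u r) →
        ∀ r < m, fwd e s d u (e (u 0)) r ≤ t (p r)) ∧
    (∀ l : ℝ, l < fwd e s d u (e (u 0)) (m - 1) →
        ¬ ∃ (π : ℕ → V) (L : ℕ) (t : ℕ → ℝ) (p : ℕ → ℕ),
            TimeFeasible e s d π L t ∧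
            (∀ r r', r < r' → r' < m → p r < p r') ∧
            (∀ r < m, p r < L) ∧
            (∀ r < m, π (p r) = u r) ∧
            t (p (m - 1)) ≤ l) := by
  refine ⟨fun π L t p hf hp hpL hu ↦ fwd_le_of_timeFeasible_of_subsequence htri hs hf hp hpL hu,
    ?_⟩
  rintro l hl ⟨π, L, t, p, hf, hp, hpL, hu, hlast⟩
  have := fwd_le_of_timeFeasible_of_subsequence htri hs hf hp hpL hu (m - 1) (by omega)
  linarith
end

section
/- (Soundness of the paper's novel arc-elimination rule 6.) Assume the travel times satisfy the triangle inequality and the service durations are nonnegative. Let i, j, w be nodes (in the intended application, i is a pickup node, w = n+i is its delivery node, and j is a node distinct from i and w) and let l(w) be the latest allowed service time at w. Suppose the forward schedule along the three-node path (i, j, w) started at time e(i) has final value strictly greater than l(w). Then there is no route (pi_1, ..., pi_L) with a time-feasible schedule (t_1, ..., t_L) in which, for some positions p and p'' with p + 1 < p'' <= L, pi_p = i, pi_{p+1} = j, pi_{p''} = w, and t_{p''} <= l(w). Hence, since every route serving the request of i must visit its delivery node w after i, the arc (i, j) can be eliminated from the model. -/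
/-!
The forward schedule is the pointwise least time-feasible schedule with the given start time.
On the other hand, by the triangle inequality and `s ≥ 0`, skipping the nodes strictly between
two visits of a feasible route keeps the schedule feasible; so a route through `i, j, …, w`
induces a feasible schedule `(t p, t (p + 1), t p'')` along `(i, j, w)` starting no earlier than
`e i`, whose last time is therefore at least the forward time at `w`, which exceeds `lw`.
-/

section

variable {V : Type*} {e s : V → ℝ} {d : V → V → ℝ} {v : ℕ → V} {m : ℕ} {t : ℕ → ℝ}

theorem fwd_le_of_timeFeasible {τ : ℝ} (ht : TimeFeasible e s d v m t) (hτ : τ ≤ t 0) :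
    ∀ r < m, fwd e s d v τ r ≤ t r
  | 0, _ => hτ
  | r + 1, hr => max_le (ht.1 _ hr) <| by
      linarith [fwd_le_of_timeFeasible ht hτ r (by omega), ht.2 r hr]

theorem TimeFeasible.add_le_of_lt (htri : ∀ a b c : V, d a c ≤ d a b + d b c)
    (hs : ∀ x : V, 0 ≤ s x) (ht : TimeFeasible e s d v m t) {a b : ℕ} (hab : a < b)
    (hb : b < m) : t a + s (v a) + d (v a) (v b) ≤ t b := by
  induction b, hab using Nat.le_induction with
  | base => exact ht.2 a hb
  | succ b hab ih =>
    linarith [ih (by omega), ht.2 b hb, htri (v a) (v b) (v (b + 1)), hs (v b)]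

theorem TimeFeasible.comp_of_lt (htri : ∀ a b c : V, d a c ≤ d a b + d b c)
    (hs : ∀ x : V, 0 ≤ s x) (ht : TimeFeasible e s d v m t) {n : ℕ} {f : ℕ → ℕ} {v' : ℕ → V}
    (hf : ∀ r, r + 1 < n → f r < f (r + 1)) (hfm : ∀ r < n, f r < m)
    (hv' : ∀ r < n, v' r = v (f r)) : TimeFeasible e s d v' n (t ∘ f) := by
  refine ⟨fun r hr => ?_, fun r hr => ?_⟩
  · rw [hv' r hr]
    exact ht.1 _ (hfm r hr)
  · rw [hv' r (by omega), hv' (r + 1) hr]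
    exact ht.add_le_of_lt htri hs (hf r hr) (hfm _ hr)

end

/-- Soundness of arc-elimination rule 6 (time windows and indirect request
service).  If the forward schedule along the three-node path `(i, j, w)` started
at `e i` finishes strictly after `lw`, then no route with a time-feasible
schedule visits `j` immediately after `i` and visits `w` at some later position
served no later than `lw`. -/
theorem arc_elimination_rule6_sound {V : Type*} (e s : V → ℝ) (d : V → V → ℝ)
    (htri : ∀ a b c : V, d a c ≤ d a b + d b c) (hs : ∀ x : V, 0 ≤ s x)
    (i j w : V) (lw : ℝ)
    (h : lw < fwd e s d (fun r => if r = 0 then i else if r = 1 then j else w)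
          (e i) 2) :
    ¬ ∃ (π : ℕ → V) (L : ℕ) (t : ℕ → ℝ) (p p'' : ℕ),
        TimeFeasible e s d π L t ∧
        p + 1 < p'' ∧ p'' < L ∧
        π p = i ∧ π (p + 1) = j ∧ π p'' = w ∧
        t p'' ≤ lw := by
  rintro ⟨π, L, t, p, p'', ht, hpp, hpL, rfl, rfl, rfl, hlw⟩
  let f : ℕ → ℕ := fun r => if r = 0 then p else if r = 1 then p + 1 else p''
  have hpath : TimeFeasible e s d (fun r => if r = 0 then π p else if r = 1 then π (p + 1)
      else π p'') 3 (t ∘ f) := by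
    refine ht.comp_of_lt htri hs (fun r hr => ?_) (fun r hr => ?_) (fun r hr => ?_) <;>
      obtain _ | _ | _ | r := r <;> simp [f] at hr ⊢ <;> omega
  have hw : _ ≤ t p'' := fwd_le_of_timeFeasible hpath (ht.1 p (by omega)) 2 (by norm_num)
  linarith
end

section
/- (Soundness of the paper's time-windows-and-pairing arc-elimination rule for arcs (i, n+j).) Let i and j be pickup nodes of two distinct requests with delivery nodes n+i and n+j, the four nodes being pairwise distinct. First, in any route (pi_1, ..., pi_L) with pairwise distinct entries that contains all four nodes, in which i precedes n+i, j precedes n+j, and n+j immediately follows i, the four nodes necessarily occur in the order j, i, n+j, n+i; i.e., (j, i, n+j, n+i) is a subsequence of the route. Second, assuming the travel times satisfy the triangle inequality and the service durations are nonnegative, if the forward schedule along (j, i, n+j, n+i) started at time e(j) has final value strictly greater than the latest allowed service time l(n+i), then no such route admits a time-feasible schedule whose value at the position of n+i is at most l(n+i); hence the arc (i, n+j) can be eliminated. -/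
namespace TimeFeasible

variable {V : Type*} {e s : V → ℝ} {d : V → V → ℝ} {π : ℕ → V} {L : ℕ} {t : ℕ → ℝ}

theorem add_service_add_travel_le_s5 (htri : ∀ a b c : V, d a c ≤ d a b + d b c)
    (hs : ∀ x : V, 0 ≤ s x) (ht : TimeFeasible e s d π L t) {p q : ℕ} (hpq : p < q)
    (hq : q < L) : t p + s (π p) + d (π p) (π q) ≤ t q := by
  induction q, hpq using Nat.le_induction with
  | base => exact ht.2 p hq
  | succ q hpq ih =>
    have hprev := ih (by omega)
    have hstep := ht.2 q hq
    have htri' := htri (π p) (π q) (π (q + 1))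
    have hsq := hs (π q)
    linarith

theorem fwd_le_of_subsequence (htri : ∀ a b c : V, d a c ≤ d a b + d b c)
    (hs : ∀ x : V, 0 ≤ s x)
    (ht : TimeFeasible e s d π L t) {v : ℕ → V} {pos : ℕ → ℕ} {m : ℕ}
    (hpos : ∀ r < m, pos r < pos (r + 1)) (hv : ∀ r ≤ m, v r = π (pos r)) (hm : pos m < L) :
    ∀ r ≤ m, fwd e s d v (e (v 0)) r ≤ t (pos r) := by
  have hmono : StrictMonoOn pos (Set.Iic m) := strictMonoOn_Iic_of_lt_succ hpos
  have hlt : ∀ r ≤ m, pos r < L := fun r hr =>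
    (hmono.monotoneOn (Set.mem_Iic.2 hr) (Set.mem_Iic.2 le_rfl) hr).trans_lt hm
  intro r hr
  induction r with
  | zero => simpa only [fwd, hv 0 hr] using ht.1 _ (hlt 0 hr)
  | succ r ih =>
    rw [fwd, hv r (by omega), hv (r + 1) hr]
    refine max_le (ht.1 _ (hlt _ hr)) ?_
    have hchain := ht.add_service_add_travel_le_s5 htri hs (hpos r hr) (hlt _ hr)
    linarith [ih (by omega)]

end TimeFeasible

theorem arc_elimination_pairing_sound_general {V : Type*} (e s : V → ℝ)
    (d : V → V → ℝ)
    (htri : ∀ a b c : V, d a c ≤ d a b + d b c) (hs : ∀ x : V, 0 ≤ s x)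
    (i ni j nj : V)
    (h2 : i ≠ j) (h5 : ni ≠ nj)
    (π : ℕ → V) (L : ℕ)
    (pi_ pni pj pnj : ℕ)
    (hpni : pni < L)
    (hπi : π pi_ = i) (hπni : π pni = ni) (hπj : π pj = j) (hπnj : π pnj = nj)
    (hprec1 : pi_ < pni) (hprec2 : pj < pnj) (himm : pnj = pi_ + 1) :
    (pj < pi_ ∧ pi_ < pnj ∧ pnj < pni) ∧
    (∀ l : ℝ,
        l < fwd e s d
              (fun r => if r = 0 then j else if r = 1 then i else
                if r = 2 then nj else ni) (e j) 3 →
        ∀ t : ℕ → ℝ, TimeFeasible e s d π L t → ¬ t pni ≤ l) := by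
  have hji : pj ≠ pi_ := fun h => h2 (by rw [← hπi, ← hπj, h])
  have hnn : pni ≠ pnj := fun h => h5 (by rw [← hπni, ← hπnj, h])
  have horder : pj < pi_ ∧ pi_ < pnj ∧ pnj < pni := by omega
  refine ⟨horder, fun l hl t ht => not_le.2 (hl.trans_le ?_)⟩
  exact ht.fwd_le_of_subsequence htri hs (m := 3)
    (pos := fun r => if r = 0 then pj else if r = 1 then pi_ else if r = 2 then pnj else pni)
    (by intro r hr; interval_cases r <;> simp [horder])
    (by intro r hr; interval_cases r <;> simp [hπi, hπni, hπj, hπnj]) (by simpa using hpni)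
    3 le_rfl

/-- Soundness of the time-windows-and-pairing arc-elimination rule for arcs
`(i, n+j)`.  Let `i, ni, j, nj` be pairwise distinct nodes (`ni` and `nj` being
the delivery nodes of the pickups `i` and `j`), occurring on a route with
pairwise distinct entries at positions `pi_, pni, pj, pnj`, with `i` preceding
`ni`, `j` preceding `nj`, and `nj` immediately following `i`.  Then the four
nodes occur in the order `j, i, nj, ni`, and (under the triangle inequality and
nonnegative service durations) if the forward schedule along `(j, i, nj, ni)`
started at `e j` finishes strictly after `l`, then no time-feasible schedule of
the route serves `ni` by time `l`. -/
theorem arc_elimination_pairing_sound {V : Type*} (e s : V → ℝ)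
    (d : V → V → ℝ)
    (htri : ∀ a b c : V, d a c ≤ d a b + d b c) (hs : ∀ x : V, 0 ≤ s x)
    (i ni j nj : V)
    (h1 : i ≠ ni) (h2 : i ≠ j) (h3 : i ≠ nj) (h4 : ni ≠ j) (h5 : ni ≠ nj)
    (h6 : j ≠ nj)
    (π : ℕ → V) (L : ℕ)
    (hdist : ∀ r < L, ∀ r' < L, π r = π r' → r = r')
    (pi_ pni pj pnj : ℕ)
    (hpi : pi_ < L) (hpni : pni < L) (hpj : pj < L) (hpnj : pnj < L)
    (hπi : π pi_ = i) (hπni : π pni = ni) (hπj : π pj = j) (hπnj : π pnj = nj)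
    (hprec1 : pi_ < pni) (hprec2 : pj < pnj) (himm : pnj = pi_ + 1) :
    (pj < pi_ ∧ pi_ < pnj ∧ pnj < pni) ∧
    (∀ l : ℝ,
        l < fwd e s d
              (fun r => if r = 0 then j else if r = 1 then i else
                if r = 2 then nj else ni) (e j) 3 →
        ∀ t : ℕ → ℝ, TimeFeasible e s d π L t → ¬ t pni ≤ l) :=
  arc_elimination_pairing_sound_general e s d htri hs i ni j nj h2 h5 π L pi_ pni pj pnj hpni hπi
    hπni hπj hπnj hprec1 hprec2 himm
end

section
/- (Validity of the time-window shrinking.) Let K be a finite nonempty set of vehicles, each k in K with travel times d^k satisfying the triangle inequality and with nonnegative service durations s (service at the depot takes zero time). Define the shrunk bounds l'(n+i) = min{l(n+i), l_0 - min_{k in K} d^k(n+i, 2n+1) - s(n+i)}, l'(i) = min{l(i), l'(n+i) - min_{k in K} d^k(i, n+i) - s(i)}, e'(i) = max{e(i), e_0 + min_{k in K} d^k(0, i)}, and e'(n+i) = max{e(n+i), e'(i) + s(i) + min_{k in K} d^k(i, n+i)}. Then for every vehicle k in K and every route (pi_1, ..., pi_L) of vehicle k with pi_1 = 0 and pi_L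 = 2n+1, containing i at position p and n+i at position p' with 1 < p < p' < L, and every schedule (t_1, ..., t_L) satisfying t_r >= t_{r-1} + s(pi_{r-1}) + d^k(pi_{r-1}, pi_r) for 2 <= r <= L, t_1 >= e_0, t_L <= l_0, e(i) <= t_p <= l(i), and e(n+i) <= t_{p'} <= l(n+i), the schedule also satisfies e'(i) <= t_p <= l'(i) and e'(n+i) <= t_{p'} <= l'(n+i). Hence replacing the original time windows by the shrunk windows removes no feasible solution. -/
/-!
Along a route, the triangle inequality and nonnegative service durations let the
travel-time constraints between consecutive stops be chained into the same constraint
between any two stops. Applied to depot → `i`, `i` → `ni` and `ni` → depot, and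
weakened by replacing the vehicle's travel time with the minimum over all vehicles,
this gives exactly the shrunk bounds.
-/

noncomputable def dmin {V K : Type*} [Fintype K] [Nonempty K]
    (d : K → V → V → ℝ) (a b : V) : ℝ :=
  Finset.univ.inf' Finset.univ_nonempty fun k => d k a b

lemma dmin_le {V K : Type*} [Fintype K] [Nonempty K]
    (d : K → V → V → ℝ) (k : K) (a b : V) : dmin d a b ≤ d k a b :=
  Finset.inf'_le _ (Finset.mem_univ k)

lemma schedule_add_service_add_travel_le {V : Type*} {δ : V → V → ℝ} {s : V → ℝ}
    {π : ℕ → V} {t : ℕ → ℝ} {L : ℕ}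
    (htri : ∀ a b c, δ a c ≤ δ a b + δ b c) (hs : ∀ x, 0 ≤ s x)
    (hchain : ∀ r, r + 1 < L → t r + s (π r) + δ (π r) (π (r + 1)) ≤ t (r + 1))
    {a b : ℕ} (hab : a < b) (hbL : b < L) :
    t a + s (π a) + δ (π a) (π b) ≤ t b := by
  induction b, hab using Nat.le_induction with
  | base => exact hchain a hbL
  | succ b _ ih =>
    have hprev := ih (by omega)
    have hstep := hchain b hbL
    have htri_b := htri (π a) (π b) (π (b + 1))
    have hsb := hs (π b)
    linarith

/-- Validity of the time-window shrinking: any schedule of a route of some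
vehicle `k` that starts at the depot no earlier than `e0`, returns to the depot
no later than `l0`, respects service durations and travel times along the
route, and serves the pickup `i` and its delivery `ni` within their original
time windows, also serves them within the shrunk time windows
`[e' i, l' i]` and `[e' ni, l' ni]`. -/
theorem time_window_shrinking_valid {V K : Type*} [Fintype K] [Nonempty K]
    (depot0 depotEnd i ni : V)
    (e l s : V → ℝ) (e0 l0 : ℝ)
    (d : K → V → V → ℝ)
    (htri : ∀ (k : K) (a b c : V), d k a c ≤ d k a b + d k b c)
    (hs : ∀ x : V, 0 ≤ s x) (hs0 : s depot0 = 0)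
    (k : K) (π : ℕ → V) (L : ℕ) (p p' : ℕ)
    (hstart : π 0 = depot0) (hend : π (L - 1) = depotEnd)
    (hp0 : 0 < p) (hpp' : p < p') (hp'L : p' + 1 < L)
    (hπp : π p = i) (hπp' : π p' = ni)
    (t : ℕ → ℝ)
    (hchain : ∀ r, r + 1 < L →
      t r + s (π r) + d k (π r) (π (r + 1)) ≤ t (r + 1))
    (ht0 : e0 ≤ t 0) (htL : t (L - 1) ≤ l0)
    (htp1 : e i ≤ t p) (htp2 : t p ≤ l i)
    (htp'1 : e ni ≤ t p') (htp'2 : t p' ≤ l ni) :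
    max (e i) (e0 + dmin d depot0 i) ≤ t p ∧
    t p ≤ min (l i)
        (min (l ni) (l0 - dmin d ni depotEnd - s ni) - dmin d i ni - s i) ∧
    max (e ni) (max (e i) (e0 + dmin d depot0 i) + s i + dmin d i ni) ≤ t p' ∧
    t p' ≤ min (l ni) (l0 - dmin d ni depotEnd - s ni) := by
  have hdepot_i := schedule_add_service_add_travel_le (htri k) hs hchain hp0 (by omega)
  have hi_ni := schedule_add_service_add_travel_le (htri k) hs hchain hpp' (by omega)
  have hni_depot := schedule_add_service_add_travel_le (htri k) hs hchain
    (b := L - 1) (by omega : p' < L - 1) (by omega)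
  rw [hstart, hs0, hπp] at hdepot_i
  rw [hπp, hπp'] at hi_ni
  rw [hπp', hend] at hni_depot
  have hmin_depot_i := dmin_le d k depot0 i
  have hmin_i_ni := dmin_le d k i ni
  have hmin_ni_depot := dmin_le d k ni depotEnd
  have hi_early : max (e i) (e0 + dmin d depot0 i) ≤ t p := max_le htp1 (by linarith)
  have hni_late : t p' ≤ min (l ni) (l0 - dmin d ni depotEnd - s ni) :=
    le_min htp'2 (by linarith)
  exact ⟨hi_early, le_min htp2 (by linarith), max_le htp'1 (by linarith), hni_late⟩
end

section
/- (Validity of the path-based valid inequalities of the MIP formulation.) Let (v_1, ..., v_{w+1}) be a sequence of nodes with w >= 1, let Delta_r be the forward schedule along (v_1, ..., v_{w+1}) started at time e(v_1), and let l be a real with Delta_{w+1} > l. Let t_1, ..., t_{w+1} be reals with t_r >= e(v_r) for all 1 <= r <= w+1 and t_{w+1} <= l, and let x_1, ..., x_w be in {0,1} and satisfy: x_r = 1 implies t_{r+1} >= t_r + s(v_r) + d(v_r, v_{r+1}), for each 1 <= r <= w. Then sum_{r=1}^{w} x_r <= w - 1; i.e., a vehicle cannot use all w arcs of a path whose earliest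 arrival exceeds the destination's latest service time. -/
/-! If all arcs of the path were used, the service times `t` would form a feasible schedule along
the path, and the forward schedule is the earliest feasible one, so it would reach `v w` by time
`t w ≤ l`. Hence some arc variable is `0`, and the remaining ones are at most `1`. -/

theorem fwd_le {V : Type*} {e s : V → ℝ} {d : V → V → ℝ} {v : ℕ → V} {τ : ℝ}
    {t : ℕ → ℝ} {n : ℕ} (h₀ : τ ≤ t 0) (he : ∀ r ≤ n, e (v r) ≤ t r)
    (hstep : ∀ r < n, t r + s (v r) + d (v r) (v (r + 1)) ≤ t (r + 1)) :
    fwd e s d v τ n ≤ t n := by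
  induction n with
  | zero => exact h₀
  | succ n ih =>
    have hprev : fwd e s d v τ n ≤ t n :=
      ih (fun r hr => he r (by omega)) (fun r hr => hstep r (by omega))
    exact max_le (he (n + 1) le_rfl) (by linarith [hstep n n.lt_succ_self])

theorem Finset.sum_le_card_sub_one {ι R : Type*} [Ring R] [PartialOrder R]
    [IsOrderedAddMonoid R] {s : Finset ι} {f : ι → R} (hf : ∀ i ∈ s, f i ≤ 1) {i : ι}
    (hi : i ∈ s) (hfi : f i ≤ 0) :
    ∑ j ∈ s, f j ≤ (s.card : R) - 1 := by
  classical
  rw [← Finset.add_sum_erase s f hi, ← Finset.cast_card_erase_of_mem hi]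
  have hrest : ∑ j ∈ s.erase i, f j ≤ ((s.erase i).card : R) := by
    simpa using Finset.sum_le_card_nsmul (s.erase i) f 1 fun j hj =>
      hf j (Finset.mem_of_mem_erase hj)
  simpa using add_le_add hfi hrest

theorem path_valid_inequality_general {V : Type*} (e s : V → ℝ) (d : V → V → ℝ)
    (v : ℕ → V) (w : ℕ)
    (l : ℝ) (hl : l < fwd e s d v (e (v 0)) w)
    (t : ℕ → ℝ) (ht : ∀ r ≤ w, e (v r) ≤ t r) (htl : t w ≤ l)
    (x : ℕ → ℝ) (hx01 : ∀ r < w, x r = 0 ∨ x r = 1)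
    (hxt : ∀ r < w, x r = 1 →
      t r + s (v r) + d (v r) (v (r + 1)) ≤ t (r + 1)) :
    ∑ r ∈ Finset.range w, x r ≤ (w : ℝ) - 1 := by
  have hunused : ∃ r < w, x r ≠ 1 := by
    by_contra! hall
    have := fwd_le (ht 0 w.zero_le) ht fun r hr => hxt r hr (hall r hr)
    linarith
  obtain ⟨r₀, hr₀, hx₀⟩ := hunused
  have hle_one : ∀ r ∈ Finset.range w, x r ≤ 1 := fun r hr => by
    rcases hx01 r (Finset.mem_range.1 hr) with h | h <;> simp [h]
  simpa using Finset.sum_le_card_sub_one hle_one (Finset.mem_range.2 hr₀)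
    ((hx01 r₀ hr₀).resolve_right hx₀).le

/-- Validity of the path-based valid inequalities: if the earliest arrival of
the forward schedule along the `w`-arc path `v 0, ..., v w` (started at
`e (v 0)`) strictly exceeds `l`, then binary arc variables `x` whose activation
enforces the timing constraints, together with service times satisfying the
earliest-time bounds and `t w ≤ l`, cannot all equal one:
`∑_{r<w} x r ≤ w - 1`. -/
theorem path_valid_inequality {V : Type*} (e s : V → ℝ) (d : V → V → ℝ)
    (v : ℕ → V) (w : ℕ) (hw : 1 ≤ w)
    (l : ℝ) (hl : l < fwd e s d v (e (v 0)) w)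
    (t : ℕ → ℝ) (ht : ∀ r ≤ w, e (v r) ≤ t r) (htl : t w ≤ l)
    (x : ℕ → ℝ) (hx01 : ∀ r < w, x r = 0 ∨ x r = 1)
    (hxt : ∀ r < w, x r = 1 →
      t r + s (v r) + d (v r) (v (r + 1)) ≤ t (r + 1)) :
    ∑ r ∈ Finset.range w, x r ≤ (w : ℝ) - 1 :=
  path_valid_inequality_general e s d v w l hl t ht htl x hx01 hxt
end

section
/- (Validity of the single-direction edge cut of the MIP formulation.) Let K be a finite set, let t_i and t_j be reals, and for each k in K let x_k, y_k be in {0,1} and let c_k > 0 and c'_k > 0 be reals such that x_k = 1 implies t_j >= t_i + c_k and y_k = 1 implies t_i >= t_j + c'_k. If moreover sum_{k in K} x_k <= 1 and sum_{k in K} y_k <= 1, then sum_{k in K} x_k + sum_{k in K} y_k <= 1; i.e., in any feasible solution an edge between two serviced nodes is traversed in at most one direction. -/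
theorem Fintype.sum_eq_zero_or_exists_eq_one {K M : Type*} [Fintype K] [AddCommMonoid M] [One M]
    {x : K → M} (h01 : ∀ k, x k = 0 ∨ x k = 1) : ∑ k, x k = 0 ∨ ∃ k, x k = 1 := by
  by_cases h : ∃ k, x k = 1
  · exact Or.inr h
  · exact Or.inl (Finset.sum_eq_zero fun k _ ↦ (h01 k).resolve_right fun hk ↦ h ⟨k, hk⟩)

/-- Validity of the single-direction edge cut: if activating `x k` forces
`t j ≥ t i + c k` with `c k > 0`, activating `y k` forces `t i ≥ t j + c' k`
with `c' k > 0`, and each family of binary variables sums to at most one, then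
the two sums together are at most one — the edge is traversed in at most one
direction. -/
theorem single_direction_edge_cut {K : Type*} [Fintype K]
    (ti tj : ℝ) (x y c c' : K → ℝ)
    (hx01 : ∀ k, x k = 0 ∨ x k = 1) (hy01 : ∀ k, y k = 0 ∨ y k = 1)
    (hc : ∀ k, 0 < c k) (hc' : ∀ k, 0 < c' k)
    (hxt : ∀ k, x k = 1 → ti + c k ≤ tj)
    (hyt : ∀ k, y k = 1 → tj + c' k ≤ ti)
    (hsx : ∑ k, x k ≤ 1) (hsy : ∑ k, y k ≤ 1) :
    (∑ k, x k) + (∑ k, y k) ≤ 1 := by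
  rcases Fintype.sum_eq_zero_or_exists_eq_one hx01 with hx0 | ⟨k, hxk⟩
  · rwa [hx0, zero_add]
  rcases Fintype.sum_eq_zero_or_exists_eq_one hy01 with hy0 | ⟨k', hyk'⟩
  · rwa [hy0, add_zero]
  linarith [hxt k hxk, hyt k' hyk', hc k, hc' k']
end

section
/- (Load lower bound underlying the capacity-based arc elimination.) Let pi = (pi_1, ..., pi_M) be a route and define the load after position m as z_m = sum_{l=1}^{m} q(pi_l). If pickup nodes i and j with 1 <= i, j <= n and i ≠ j occur at positions p < p' of pi and neither delivery node n+i nor n+j occurs at a position <= p', then z_{p'} >= q_i + q_j. Consequently, if the route is executed by a vehicle of capacity Q, i.e., z_m <= Q for all 1 <= m <= M, then q_i + q_j <= Q; hence when q_i + q_j exceeds the largest vehicle capacity, the two requests cannot be simultaneously on board and the corresponding arcs pairing them can be eliminated. -/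
/-!
The load after position `p'` is the total demand of the set `V` of nodes visited so far. Every
delivery `n + r` in `V` has its pickup `r` in `V`, so the deliveries cancel against some of the
pickups and the remaining pickups have nonnegative demand. Removing `i` and `j` from `V` keeps this
closure property, because `n + i` and `n + j` are not in `V`; hence the load is at least
`q i + q j`.
-/

open Finset

theorem sum_demand_nonneg_of_pickup_mem {M : Type*} [AddCommGroup M] [PartialOrder M]
    [IsOrderedAddMonoid M] {n : ℕ} {q : ℕ → M}
    (hq : ∀ r, 1 ≤ r → r ≤ n → 0 ≤ q r)
    (hqd : ∀ r, 1 ≤ r → r ≤ n → q (n + r) = -q r)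
    {V : Finset ℕ} (hV : ∀ v ∈ V, 1 ≤ v ∧ v ≤ 2 * n)
    (hpickup : ∀ r, 1 ≤ r → r ≤ n → n + r ∈ V → r ∈ V) :
    0 ≤ ∑ v ∈ V, q v := by
  set P := V.filter (· ≤ n)
  set R := P.filter (n + · ∈ V)
  have hdeliveries : V.filter (¬ · ≤ n) = R.image (n + ·) := by
    ext v
    simp only [P, R, mem_filter, mem_image]
    constructor
    · rintro ⟨hv, hvn⟩
      have := hV v hv
      exact ⟨v - n, ⟨⟨hpickup _ (by omega) (by omega) (by rwa [Nat.add_sub_cancel' (by omega)]),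
        by omega⟩, by rwa [Nat.add_sub_cancel' (by omega)]⟩, by omega⟩
    · rintro ⟨r, ⟨hrP, hr⟩, rfl⟩
      exact ⟨hr, by have := hV r hrP.1; omega⟩
  have hR : ∑ r ∈ R, q (n + r) = -∑ r ∈ R, q r := by
    rw [← sum_neg_distrib]
    refine sum_congr rfl fun r hr => ?_
    simp only [R, P, mem_filter] at hr
    exact hqd r (hV r hr.1.1).1 hr.1.2
  rw [← sum_filter_add_sum_filter_not V (· ≤ n), hdeliveries,
    sum_image fun _ _ _ _ h => Nat.add_left_cancel h, hR, ← sub_eq_add_neg,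
    ← sum_sdiff_eq_sub (filter_subset _ _)]
  refine sum_nonneg fun r hr => ?_
  have hrP : r ∈ P := (mem_sdiff.mp hr).1
  simp only [P, mem_filter] at hrP
  exact hq r (hV r hrP.1).1 hrP.2

theorem pickup_mem_image_range {n M p : ℕ} {π : ℕ → ℕ}
    (hprec : ∀ m < M, ∀ r, 1 ≤ r → r ≤ n → π m = n + r → ∃ m' < m, π m' = r) (hpM : p < M)
    {r : ℕ} (hr1 : 1 ≤ r) (hrn : r ≤ n) (hr : n + r ∈ (range (p + 1)).image π) :
    r ∈ (range (p + 1)).image π := by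
  obtain ⟨m, hm, hπm⟩ := mem_image.mp hr
  rw [mem_range] at hm
  obtain ⟨m', hm'm, rfl⟩ := hprec m (by omega) r hr1 hrn hπm
  exact mem_image_of_mem π (mem_range.mpr (by omega))

theorem load_lower_bound_general (n : ℕ) (q : ℕ → ℝ)
    (hq : ∀ r, 1 ≤ r → r ≤ n → 0 ≤ q r)
    (hqd : ∀ r, 1 ≤ r → r ≤ n → q (n + r) = -q r)
    (M : ℕ) (π : ℕ → ℕ)
    (hrange : ∀ m < M, 1 ≤ π m ∧ π m ≤ 2 * n)
    (hdist : ∀ m < M, ∀ m' < M, π m = π m' → m = m')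
    (hprec : ∀ m < M, ∀ r, 1 ≤ r → r ≤ n → π m = n + r → ∃ m' < m, π m' = r)
    (i j p p' : ℕ)
    (hij : i ≠ j)
    (hpp' : p < p') (hp'M : p' < M)
    (hπp : π p = i) (hπp' : π p' = j)
    (hnodel : ∀ m ≤ p', π m ≠ n + i ∧ π m ≠ n + j) :
    q i + q j ≤ ∑ m ∈ Finset.range (p' + 1), q (π m) ∧
    ∀ Q : ℝ, (∀ m < M, ∑ m' ∈ Finset.range (m + 1), q (π m') ≤ Q) →
      q i + q j ≤ Q := by
  have hprefix : ∀ m ∈ range (p' + 1), m < M := fun m hm => by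
    rw [mem_range] at hm; omega
  set V := (range (p' + 1)).image π
  have hijV : {i, j} ⊆ V := by
    rw [insert_subset_iff, singleton_subset_iff, ← hπp, ← hπp']
    exact ⟨mem_image_of_mem π (mem_range.mpr (by omega)),
      mem_image_of_mem π (self_mem_range_succ p')⟩
  have hnodelV : n + i ∉ V ∧ n + j ∉ V := by
    simp only [V, mem_image, mem_range, Nat.lt_succ_iff, not_exists, not_and]
    exact ⟨fun m hm => (hnodel m hm).1, fun m hm => (hnodel m hm).2⟩
  have hrest : 0 ≤ ∑ v ∈ V \ {i, j}, q v := by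
    refine sum_demand_nonneg_of_pickup_mem hq hqd (fun v hv => ?_) fun r hr1 hrn hr => ?_
    · obtain ⟨m, hm, rfl⟩ := mem_image.mp (mem_sdiff.mp hv).1
      exact hrange m (hprefix m hm)
    · have hrV := (mem_sdiff.mp hr).1
      refine mem_sdiff.mpr ⟨pickup_mem_image_range hprec hp'M hr1 hrn hrV, fun hrij => ?_⟩
      rcases mem_insert.mp hrij with rfl | hrj
      · exact hnodelV.1 hrV
      · exact hnodelV.2 (mem_singleton.mp hrj ▸ hrV)
  have hload : ∑ m ∈ range (p' + 1), q (π m) = ∑ v ∈ V \ {i, j}, q v + (q i + q j) := by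
    rw [← sum_pair hij, sum_sdiff hijV,
      sum_image fun a ha b hb => hdist a (hprefix a ha) b (hprefix b hb)]
  have hbound : q i + q j ≤ ∑ m ∈ range (p' + 1), q (π m) := by
    rw [hload]; linarith
  exact ⟨hbound, fun Q hQ => hbound.trans (hQ p' hp'M)⟩

/-- Load lower bound underlying the capacity-based arc elimination.  Along a
route `π` of pairwise distinct nodes indexed `1, …, 2n` (pickup `r` has demand
`q r ≥ 0`, delivery `n + r` has demand `-q r`, and every delivery is preceded
by its pickup), if the distinct pickups `i` and `j` occur at positions
`p < p'` and neither delivery `n + i` nor `n + j` occurs at a position `≤ p'`,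
then the load just after position `p'` is at least `q i + q j`; consequently,
any capacity `Q` respected by all the loads satisfies `q i + q j ≤ Q`. -/
theorem load_lower_bound (n : ℕ) (hn : 1 ≤ n) (q : ℕ → ℝ)
    (hq : ∀ r, 1 ≤ r → r ≤ n → 0 ≤ q r)
    (hqd : ∀ r, 1 ≤ r → r ≤ n → q (n + r) = -q r)
    (M : ℕ) (π : ℕ → ℕ)
    (hrange : ∀ m < M, 1 ≤ π m ∧ π m ≤ 2 * n)
    (hdist : ∀ m < M, ∀ m' < M, π m = π m' → m = m')
    (hprec : ∀ m < M, ∀ r, 1 ≤ r → r ≤ n → π m = n + r → ∃ m' < m, π m' = r)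
    (i j p p' : ℕ)
    (hi1 : 1 ≤ i) (hin : i ≤ n) (hj1 : 1 ≤ j) (hjn : j ≤ n) (hij : i ≠ j)
    (hpp' : p < p') (hp'M : p' < M)
    (hπp : π p = i) (hπp' : π p' = j)
    (hnodel : ∀ m ≤ p', π m ≠ n + i ∧ π m ≠ n + j) :
    q i + q j ≤ ∑ m ∈ Finset.range (p' + 1), q (π m) ∧
    ∀ Q : ℝ, (∀ m < M, ∑ m' ∈ Finset.range (m + 1), q (π m') ≤ Q) →
      q i + q j ≤ Q :=
  load_lower_bound_general n q hq hqd M π hrange hdist hprec i j p p' hij hpp' hp'M hπp hπp' hnodel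
end
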